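/- Let A ∈ M_m(M_n) be positive semidefinite. Then (tr A)^{mn} + (det(tr₂A))^n ≥ n^{mn}·(det A + (det(tr₁A))^m). -/

import Mathlib

open Matrix BigOperators ComplexOrder

/-- First partial trace: sum of the diagonal blocks. -/
noncomputable def ptrace1 {n k : ℕ} (H : Matrix (Fin n × Fin k) (Fin n × Fin k) ℂ) :
    Matrix (Fin k) (Fin k) ℂ :=
  Matrix.of fun l m => ∑ i : Fin n, H (i, l) (i, m)

/-- Second partial trace: matrix of traces of the blocks. -/
noncomputable def ptrace2 {n k : ℕ} (H : Matrix (Fin n × Fin k) (Fin n × Fin k) ℂ) :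
    Matrix (Fin n) (Fin n) ℂ :=
  Matrix.of fun i j => ∑ l : Fin k, H (i, l) (j, l)

open Kronecker
open scoped Finset MatrixOrder

/-!
Both halves are AM–GM for eigenvalues: `d ^ d * det X ≤ (tr X) ^ d` for a positive semidefinite
`X` of size `d`. For `X = tr₁A`, whose trace is `tr A`, raising to the `m`-th power gives
`n ^ (mn) * (det tr₁A) ^ m ≤ (tr A) ^ (mn)`. For `T = tr₂A` (positive definite once `det A ≠ 0`)
apply it to `B A Bᴴ` where `T⁻¹ ⊗ I = Bᴴ B`: its trace is `tr (T⁻¹ T) = m` and its determinant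
is `det A / (det T) ^ n`, which gives `n ^ (mn) * det A ≤ (det T) ^ n`.
-/

namespace Real

theorem pow_card_mul_prod_le_sum_pow {ι : Type*} (s : Finset ι) {z : ι → ℝ}
    (hz : ∀ i ∈ s, 0 ≤ z i) : (#s : ℝ) ^ #s * ∏ i ∈ s, z i ≤ (∑ i ∈ s, z i) ^ #s := by
  rcases s.eq_empty_or_nonempty with rfl | hs
  · simp
  have hcard : (0 : ℝ) < #s := by exact_mod_cast hs.card_pos
  have amgm := geom_mean_le_arith_mean s 1 z (fun _ _ => zero_le_one) (by simpa using hcard) hz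
  simp only [Pi.one_apply, rpow_one, one_mul, Finset.sum_const, nsmul_eq_mul, mul_one] at amgm
  have h := pow_le_pow_left₀ (rpow_nonneg (Finset.prod_nonneg hz) _) amgm #s
  rwa [← rpow_natCast, ← rpow_mul (Finset.prod_nonneg hz), inv_mul_cancel₀ hcard.ne', rpow_one,
    div_pow, le_div_iff₀ (by positivity), mul_comm] at h

end Real

namespace Matrix

variable {ι : Type*} [Fintype ι] [DecidableEq ι]

theorem IsHermitian.ofReal_re_det {A : Matrix ι ι ℂ} (hA : A.IsHermitian) :
    ((A.det.re : ℝ) : ℂ) = A.det :=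
  Complex.conj_eq_iff_re.mp (by simpa [hA.eq] using (det_conjTranspose A).symm)

theorem PosSemidef.re_det_nonneg {A : Matrix ι ι ℂ} (hA : A.PosSemidef) : 0 ≤ A.det.re :=
  (Complex.nonneg_iff.mp hA.det_nonneg).1

theorem PosSemidef.card_pow_mul_re_det_le_re_trace_pow {A : Matrix ι ι ℂ} (hA : A.PosSemidef) :
    (Fintype.card ι : ℝ) ^ Fintype.card ι * A.det.re ≤ A.trace.re ^ Fintype.card ι := by
  rw [hA.1.det_eq_prod_eigenvalues, hA.1.trace_eq_sum_eigenvalues]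
  simpa [← Complex.ofReal_prod] using
    Real.pow_card_mul_prod_le_sum_pow Finset.univ fun i _ => hA.eigenvalues_nonneg i

theorem PosSemidef.card_pow_mul_re_det_mul_re_det_le_re_trace_mul_pow {G A : Matrix ι ι ℂ}
    (hG : G.PosSemidef) (hA : A.PosSemidef) :
    (Fintype.card ι : ℝ) ^ Fintype.card ι * (G.det.re * A.det.re) ≤
      (G * A).trace.re ^ Fintype.card ι := by
  obtain ⟨B, rfl⟩ := CStarAlgebra.nonneg_iff_eq_star_mul_self.mp hG.nonneg
  have hY := hA.mul_mul_conjTranspose_same B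
  have htrace : (B * A * Bᴴ).trace = (star B * B * A).trace := by
    rw [trace_mul_cycle, star_eq_conjTranspose, Matrix.mul_assoc]
  have hdet : (B * A * Bᴴ).det.re = (star B * B).det.re * A.det.re := by
    have : (B * A * Bᴴ).det = (star B * B).det * A.det := by
      simp only [det_mul, star_eq_conjTranspose]
      ring
    rw [this, ← hG.1.ofReal_re_det, Complex.re_ofReal_mul, Complex.ofReal_re]
  simpa only [hdet, htrace] using hY.card_pow_mul_re_det_le_re_trace_pow

end Matrix

section PartialTrace

variable {m n : ℕ}

theorem ptrace1_eq_sum_submatrix (A : Matrix (Fin m × Fin n) (Fin m × Fin n) ℂ) :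
    ptrace1 A = ∑ i, A.submatrix (Prod.mk i) (Prod.mk i) := by
  ext l l'
  simp [ptrace1, Matrix.sum_apply]

theorem ptrace2_eq_sum_submatrix (A : Matrix (Fin m × Fin n) (Fin m × Fin n) ℂ) :
    ptrace2 A = ∑ l, A.submatrix (·, l) (·, l) := by
  ext i j
  simp [ptrace2, Matrix.sum_apply]

theorem trace_ptrace1 (A : Matrix (Fin m × Fin n) (Fin m × Fin n) ℂ) :
    (ptrace1 A).trace = A.trace := by
  simp only [trace, diag, ptrace1, of_apply, Fintype.sum_prod_type]
  exact Finset.sum_comm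

theorem trace_kronecker_one_mul_eq_trace_mul_ptrace2 (B : Matrix (Fin m) (Fin m) ℂ)
    (A : Matrix (Fin m × Fin n) (Fin m × Fin n) ℂ) :
    ((B ⊗ₖ (1 : Matrix (Fin n) (Fin n) ℂ)) * A).trace = (B * ptrace2 A).trace := by
  simp only [trace, diag, mul_apply, Fintype.sum_prod_type, kroneckerMap_apply, one_apply,
    mul_ite, mul_one, mul_zero, ite_mul, zero_mul, Finset.sum_ite_eq, Finset.mem_univ, if_true,
    ptrace2, of_apply]
  simp only [Finset.mul_sum]
  exact Finset.sum_congr rfl fun _ _ => Finset.sum_comm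

variable {A : Matrix (Fin m × Fin n) (Fin m × Fin n) ℂ}

theorem Matrix.PosSemidef.ptrace1 (hA : A.PosSemidef) : (ptrace1 A).PosSemidef := by
  rw [ptrace1_eq_sum_submatrix]
  exact posSemidef_sum _ fun i _ => hA.submatrix _

theorem Matrix.PosSemidef.ptrace2 (hA : A.PosSemidef) : (ptrace2 A).PosSemidef := by
  rw [ptrace2_eq_sum_submatrix]
  exact posSemidef_sum _ fun l _ => hA.submatrix _

theorem Matrix.PosDef.ptrace2 (hn : 0 < n) (hA : A.PosDef) : (ptrace2 A).PosDef := by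
  rw [ptrace2_eq_sum_submatrix]
  exact posDef_sum ⟨⟨0, hn⟩, Finset.mem_univ _⟩ fun l _ =>
    hA.submatrix fun _ _ h => (Prod.mk.inj h).1

theorem pow_mul_re_det_ptrace1_pow_le_re_trace_pow (hA : A.PosSemidef) :
    (n : ℝ) ^ (m * n) * (ptrace1 A).det.re ^ m ≤ A.trace.re ^ (m * n) := by
  have h := hA.ptrace1.card_pow_mul_re_det_le_re_trace_pow
  rw [Fintype.card_fin, trace_ptrace1] at h
  have := hA.ptrace1.re_det_nonneg
  calc (n : ℝ) ^ (m * n) * (ptrace1 A).det.re ^ m = ((n : ℝ) ^ n * (ptrace1 A).det.re) ^ m := by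
        ring
    _ ≤ (A.trace.re ^ n) ^ m := pow_le_pow_left₀ (by positivity) h m
    _ = A.trace.re ^ (m * n) := by ring

theorem pow_mul_re_det_le_re_det_ptrace2_pow (hm : 0 < m) (hn : 0 < n) (hA : A.PosSemidef) :
    (n : ℝ) ^ (m * n) * A.det.re ≤ (ptrace2 A).det.re ^ n := by
  by_cases hdet : A.det = 0
  · rw [hdet, Complex.zero_re, mul_zero]
    exact pow_nonneg hA.ptrace2.re_det_nonneg n
  have hT : (ptrace2 A).PosDef := (hA.posDef_iff_det_ne_zero.mpr hdet).ptrace2 hn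
  set t := (ptrace2 A).det.re
  have ht : 0 < t := (Complex.pos_iff.mp hT.det_pos).1
  have hG : ((ptrace2 A)⁻¹ ⊗ₖ (1 : Matrix (Fin n) (Fin n) ℂ)).PosSemidef :=
    hT.inv.posSemidef.kronecker PosSemidef.one
  have htrace : (((ptrace2 A)⁻¹ ⊗ₖ (1 : Matrix (Fin n) (Fin n) ℂ)) * A).trace.re = m := by
    rw [trace_kronecker_one_mul_eq_trace_mul_ptrace2,
      nonsing_inv_mul _ ((isUnit_iff_isUnit_det _).mp hT.isUnit), trace_one]
    simp
  have hdetG : ((ptrace2 A)⁻¹ ⊗ₖ (1 : Matrix (Fin n) (Fin n) ℂ)).det.re = t⁻¹ ^ n := by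
    rw [det_kronecker, det_one, one_pow, mul_one, Fintype.card_fin, det_nonsing_inv,
      Ring.inverse_eq_inv', ← hT.1.ofReal_re_det, ← Complex.ofReal_inv, ← Complex.ofReal_pow,
      Complex.ofReal_re]
  have key := hG.card_pow_mul_re_det_mul_re_det_le_re_trace_mul_pow hA
  rw [htrace, hdetG, Fintype.card_prod, Fintype.card_fin, Fintype.card_fin, Nat.cast_mul,
    mul_pow, inv_pow] at key
  have hmpow : (0 : ℝ) < (m : ℝ) ^ (m * n) := by positivity
  have hscaled :
      (m : ℝ) ^ (m * n) * ((n : ℝ) ^ (m * n) * A.det.re / t ^ n) ≤ (m : ℝ) ^ (m * n) * 1 := by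
    convert key using 1 <;> field_simp
  rwa [mul_le_mul_iff_right₀ hmpow, div_le_one (by positivity)] at hscaled

end PartialTrace

/-- Theorem 4.4 (second inequality):
(tr A)^{mn} + (det tr₂A)^n ≥ n^{mn}(det A + (det tr₁A)^m). -/
theorem stmt17 {m n : ℕ} (hm : 0 < m) (hn : 0 < n)
    (A : Matrix (Fin m × Fin n) (Fin m × Fin n) ℂ) (hA : A.PosSemidef) :
    A.trace.re ^ (m * n) + (ptrace2 A).det.re ^ n ≥
      (n : ℝ) ^ (m * n) * (A.det.re + (ptrace1 A).det.re ^ m) := by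
  have h₁ := pow_mul_re_det_ptrace1_pow_le_re_trace_pow hA
  have h₂ := pow_mul_re_det_le_re_det_ptrace2_pow hm hn hA
  rw [mul_add]
  linarith
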